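/- Deterministic ergodic gap bound for dual averaging: run X_k = Q(Y_k), Y_{k+1} = Y_k + γ_k v(X_k) with ‖v(x)‖* ≤ V for all x. If X* is globally variationally stable with gap function ε(x) = inf_{x*∈X*} ⟨v(x), x* − x⟩ ≥ 0, then (Σ_{k=1}^n γ_k ε(X_k)) / (Σ_{k=1}^n γ_k) ≤ (F(X*, Y_1) + (V²/(2K)) Σ_{k=1}^n γ_k²) / (Σ_{k=1}^n γ_k), where F(X*, y) = inf_{x*∈X*} F(x*, y). -/

import Mathlib

/-!
The Fenchel coupling `F(p, y) = h p + h* y - ⟪y, p⟫` is a Lyapunov function for dual averaging.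
Since `h` is `K`-strongly convex, its conjugate `h*` is `1/K`-smooth, which gives the one-step
bound `F(p, y + w) ≤ F(p, y) + ⟪w, Q y - p⟫ + ‖w‖² / (2K)`. Telescoping along the iterates and
dropping `F(p, Y (n + 1)) ≥ 0` bounds `∑ γ_k ⟪v(X_k), p - X_k⟫` by `F(p, Y 1) + V²/(2K) ∑ γ_k²`
for every `p ∈ X*`; the gap bound follows by taking the infimum over `p`.
-/

open Finset Filter Topology

section StrongConvexity

variable {E : Type*} [NormedAddCommGroup E] [NormedSpace ℝ E] {s : Set E} {m : ℝ} {f : E → ℝ}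

lemma strongConvexOn_of_forall_mem_Icc (hs : Convex ℝ s)
    (hf : ∀ x ∈ s, ∀ x' ∈ s, ∀ t ∈ Set.Icc (0 : ℝ) 1,
      f (t • x + (1 - t) • x') ≤ t * f x + (1 - t) * f x' - m / 2 * t * (1 - t) * ‖x' - x‖ ^ 2) :
    StrongConvexOn s m f := by
  refine ⟨hs, fun x hx x' hx' a b ha hb hab => ?_⟩
  obtain rfl : b = 1 - a := by linarith
  have := hf x hx x' hx' a ⟨ha, by linarith⟩
  rw [norm_sub_rev] at this
  simp only [smul_eq_mul]
  linarith

lemma StrongConvexOn.add_sq_le_of_isMinOn (hf : StrongConvexOn s m f) {x x' : E}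
    (hx : x ∈ s) (hx' : x' ∈ s) (hmin : IsMinOn f s x) :
    f x + m / 2 * ‖x' - x‖ ^ 2 ≤ f x' := by
  set c := m / 2 * ‖x' - x‖ ^ 2 with hc
  -- compare `f x` with `f` at the point a fraction `t` of the way towards `x'`, then let `t → 0`
  have hstep : ∀ t ∈ Set.Ioo (0 : ℝ) 1, (1 - t) * c ≤ f x' - f x := by
    rintro t ⟨ht0, ht1⟩
    have hmem : t • x' + (1 - t) • x ∈ s := hf.1 hx' hx ht0.le (by linarith) (by ring)
    have hconv := hf.2 hx' hx ht0.le (sub_nonneg.2 ht1.le) (by ring)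
    have hle := isMinOn_iff.1 hmin _ hmem
    simp only [smul_eq_mul] at hconv
    refine le_of_mul_le_mul_left ?_ ht0
    rw [hc]
    linarith
  have hlim : Tendsto (fun t : ℝ => (1 - t) * c) (𝓝[>] 0) (𝓝 c) := by
    have hcont : Continuous fun t : ℝ => (1 - t) * c := by fun_prop
    simpa using (hcont.tendsto 0).mono_left nhdsWithin_le_nhds
  have := le_of_tendsto hlim (by filter_upwards [Ioo_mem_nhdsGT one_pos] using hstep)
  linarith

end StrongConvexity

lemma add_sum_Icc_le_of_succ_add_le {a b c : ℕ → ℝ} (hstep : ∀ k, a (k + 1) + b k ≤ a k + c k)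
    (n : ℕ) : a (n + 1) + ∑ k ∈ Icc 1 n, b k ≤ a 1 + ∑ k ∈ Icc 1 n, c k := by
  induction n with
  | zero => simp
  | succ n ih =>
    rw [sum_Icc_succ_top (by omega), sum_Icc_succ_top (by omega)]
    linarith [hstep (n + 1)]

section MirrorMap

variable {E : Type*} [NormedAddCommGroup E] [InnerProductSpace ℝ E]

def IsMirrorMap (X : Set E) (h : E → ℝ) (Q : E → E) : Prop :=
  ∀ y : E, Q y ∈ X ∧ ∀ x ∈ X, (inner ℝ y x : ℝ) - h x ≤ (inner ℝ y (Q y) : ℝ) - h (Q y)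

/-- The convex conjugate `h* y = max_{x ∈ X} (⟪y, x⟫ - h x)`, evaluated at the maximizer `Q y`. -/
def fenchelConj (h : E → ℝ) (Q : E → E) (y : E) : ℝ :=
  (inner ℝ y (Q y) : ℝ) - h (Q y)

def fenchelCoupling (h : E → ℝ) (Q : E → E) (p y : E) : ℝ :=
  h p + fenchelConj h Q y - (inner ℝ y p : ℝ)

variable {X : Set E} {h : E → ℝ} {Q : E → E} {K V : ℝ}

namespace IsMirrorMap

lemma fenchelCoupling_nonneg (hQ : IsMirrorMap X h Q) {p : E} (hp : p ∈ X) (y : E) :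
    0 ≤ fenchelCoupling h Q p y := by
  have := (hQ y).2 p hp
  unfold fenchelCoupling fenchelConj
  linarith

lemma sub_inner_add_sq_le (hQ : IsMirrorMap X h Q) (hh : StrongConvexOn X K h) (y : E)
    {x : E} (hx : x ∈ X) :
    h (Q y) - inner ℝ y (Q y) + K / 2 * ‖x - Q y‖ ^ 2 ≤ h x - inner ℝ y x := by
  have hconv : StrongConvexOn X K (fun x => h x - inner ℝ y x) := by
    simpa using! hh.sub ((innerₛₗ ℝ y).concaveOn hh.1).uniformConcaveOn_zero
  refine hconv.add_sq_le_of_isMinOn (hQ y).1 hx (isMinOn_iff.2 fun x hx => ?_)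
  linarith [(hQ y).2 x hx]

lemma fenchelConj_add_le (hQ : IsMirrorMap X h Q) (hh : StrongConvexOn X K h) (hK : 0 < K)
    (y w : E) :
    fenchelConj h Q (y + w) ≤ fenchelConj h Q y + inner ℝ w (Q y) + ‖w‖ ^ 2 / (2 * K) := by
  set x := Q y
  set x' := Q (y + w)
  have hopt := hQ.sub_inner_add_sq_le hh y (hQ (y + w)).1
  have hCS : inner ℝ w (x' - x) ≤ ‖w‖ * ‖x' - x‖ := real_inner_le_norm _ _
  -- AM-GM: `‖w‖ d ≤ ‖w‖² / (2K) + K d² / 2` with `d = ‖x' - x‖`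
  have hAMGM : ‖w‖ * ‖x' - x‖ - K / 2 * ‖x' - x‖ ^ 2 ≤ ‖w‖ ^ 2 / (2 * K) := by
    rw [le_div_iff₀ (by positivity)]
    nlinarith [sq_nonneg (‖w‖ - K * ‖x' - x‖)]
  rw [inner_sub_right] at hCS
  unfold fenchelConj
  rw [inner_add_left]
  linarith

lemma fenchelCoupling_add_le (hQ : IsMirrorMap X h Q) (hh : StrongConvexOn X K h) (hK : 0 < K)
    (p y w : E) :
    fenchelCoupling h Q p (y + w) + inner ℝ w (p - Q y) ≤
      fenchelCoupling h Q p y + ‖w‖ ^ 2 / (2 * K) := by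
  have := hQ.fenchelConj_add_le hh hK y w
  unfold fenchelCoupling
  rw [inner_add_left, inner_sub_right]
  linarith

lemma fenchelCoupling_add_smul_le (hQ : IsMirrorMap X h Q) (hh : StrongConvexOn X K h)
    (hK : 0 < K) (p y : E) (γ : ℝ) {u : E} (hu : ‖u‖ ≤ V) :
    fenchelCoupling h Q p (y + γ • u) + γ * inner ℝ u (p - Q y) ≤
      fenchelCoupling h Q p y + V ^ 2 / (2 * K) * γ ^ 2 := by
  have hnorm : ‖γ • u‖ ^ 2 ≤ γ ^ 2 * V ^ 2 := by
    rw [norm_smul, mul_pow, Real.norm_eq_abs, sq_abs]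
    gcongr
  have hdiv : ‖γ • u‖ ^ 2 / (2 * K) ≤ V ^ 2 / (2 * K) * γ ^ 2 := by
    rw [div_mul_eq_mul_div, mul_comm (V ^ 2)]
    gcongr
  have := hQ.fenchelCoupling_add_le hh hK p y (γ • u)
  rw [real_inner_smul_left] at this
  linarith

lemma sum_inner_le_fenchelCoupling (hQ : IsMirrorMap X h Q) (hh : StrongConvexOn X K h)
    (hK : 0 < K) {v : E → E} (hV : ∀ x ∈ X, ‖v x‖ ≤ V) {γ : ℕ → ℝ} {Y : ℕ → E}
    (hrec : ∀ n, Y (n + 1) = Y n + γ n • v (Q (Y n))) {p : E} (hp : p ∈ X) (n : ℕ) :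
    ∑ k ∈ Icc 1 n, γ k * inner ℝ (v (Q (Y k))) (p - Q (Y k)) ≤
      fenchelCoupling h Q p (Y 1) + V ^ 2 / (2 * K) * ∑ k ∈ Icc 1 n, γ k ^ 2 := by
  have htele := add_sum_Icc_le_of_succ_add_le (a := fun k => fenchelCoupling h Q p (Y k))
    (fun k => by
      simpa only [hrec k] using
        hQ.fenchelCoupling_add_smul_le hh hK p (Y k) (γ k) (hV _ (hQ (Y k)).1)) n
  rw [← mul_sum] at htele
  linarith [hQ.fenchelCoupling_nonneg hp (Y (n + 1))]

end IsMirrorMap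

end MirrorMap

theorem stmt17_general
    {E : Type*} [NormedAddCommGroup E] [InnerProductSpace ℝ E]
    (X : Set E) (hXc : IsCompact X) (hXconv : Convex ℝ X)
    (h : E → ℝ)
    (K : ℝ) (hK : 0 < K)
    (hsc : ∀ x ∈ X, ∀ x' ∈ X, ∀ t ∈ Set.Icc (0 : ℝ) 1,
      h (t • x + (1 - t) • x') ≤ t * h x + (1 - t) * h x' - K / 2 * t * (1 - t) * ‖x' - x‖ ^ 2)
    (Q : E → E)
    (hQ : ∀ y : E, Q y ∈ X ∧ ∀ x ∈ X, (inner ℝ y x : ℝ) - h x ≤ (inner ℝ y (Q y) : ℝ) - h (Q y))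
    (v : E → E)
    (V : ℝ) (hV : ∀ x ∈ X, ‖v x‖ ≤ V)
    (Xs : Set E) (hXsne : Xs.Nonempty) (hXsX : Xs ⊆ X)
    (γ : ℕ → ℝ) (hγ : ∀ n, 0 < γ n)
    (Y : ℕ → E) (hrec : ∀ n : ℕ, Y (n + 1) = Y n + γ n • v (Q (Y n))) :
    ∀ n : ℕ,
      (∑ k ∈ Finset.Icc 1 n, γ k * sInf ((fun p => (inner ℝ (v (Q (Y k))) (p - Q (Y k)) : ℝ)) '' Xs))
          / (∑ k ∈ Finset.Icc 1 n, γ k) ≤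
        (sInf ((fun p => h p + ((inner ℝ (Y 1) (Q (Y 1)) : ℝ) - h (Q (Y 1)))
            - (inner ℝ (Y 1) p : ℝ)) '' Xs)
          + V ^ 2 / (2 * K) * ∑ k ∈ Finset.Icc 1 n, γ k ^ 2)
          / (∑ k ∈ Finset.Icc 1 n, γ k) := by
  intro n
  have hmirror : IsMirrorMap X h Q := hQ
  have hh : StrongConvexOn X K h := strongConvexOn_of_forall_mem_Icc hXconv hsc
  have hgap : ∀ k, ∀ p ∈ Xs,
      sInf ((fun p => inner ℝ (v (Q (Y k))) (p - Q (Y k))) '' Xs) ≤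
        inner ℝ (v (Q (Y k))) (p - Q (Y k)) := by
    intro k p hp
    have hcont : Continuous fun p : E => inner ℝ (v (Q (Y k))) (p - Q (Y k)) := by fun_prop
    exact csInf_le ((hXc.image hcont).bddBelow.mono (Set.image_mono hXsX)) ⟨p, hp, rfl⟩
  refine div_le_div_of_nonneg_right ?_ (sum_nonneg fun k _ => (hγ k).le)
  rw [← sub_le_iff_le_add]
  refine le_csInf (hXsne.image _) ?_
  rintro _ ⟨p, hp, rfl⟩
  rw [sub_le_iff_le_add]
  calc ∑ k ∈ Icc 1 n, γ k * sInf ((fun p => inner ℝ (v (Q (Y k))) (p - Q (Y k))) '' Xs)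
      ≤ ∑ k ∈ Icc 1 n, γ k * inner ℝ (v (Q (Y k))) (p - Q (Y k)) :=
        sum_le_sum fun k _ => mul_le_mul_of_nonneg_left (hgap k p hp) (hγ k).le
    _ ≤ fenchelCoupling h Q p (Y 1) + V ^ 2 / (2 * K) * ∑ k ∈ Icc 1 n, γ k ^ 2 :=
        hmirror.sum_inner_le_fenchelCoupling hh hK hV hrec (hXsX hp) n

/-- Deterministic ergodic gap bound for dual averaging. If `X*` is globally
variationally stable with gap function `ε(x) = inf_{x*∈X*} ⟨v(x), x* − x⟩` and `‖v‖ ≤ V` on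
`X`, then along `X_k = Q(Y_k)`, `Y_{k+1} = Y_k + γ_k v(X_k)`,
`(Σ_{k=1}^n γ_k ε(X_k)) / (Σ_{k=1}^n γ_k) ≤ (F(X*,Y_1) + (V²/(2K)) Σ_{k=1}^n γ_k²) / (Σ_{k=1}^n γ_k)`. -/
theorem stmt17
    {E : Type*} [NormedAddCommGroup E] [InnerProductSpace ℝ E] [FiniteDimensional ℝ E]
    (X : Set E) (hXc : IsCompact X) (hXconv : Convex ℝ X) (hXne : X.Nonempty)
    (h : E → ℝ) (hcont : ContinuousOn h X)
    (K : ℝ) (hK : 0 < K)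
    (hsc : ∀ x ∈ X, ∀ x' ∈ X, ∀ t ∈ Set.Icc (0 : ℝ) 1,
      h (t • x + (1 - t) • x') ≤ t * h x + (1 - t) * h x' - K / 2 * t * (1 - t) * ‖x' - x‖ ^ 2)
    (Q : E → E)
    (hQ : ∀ y : E, Q y ∈ X ∧ ∀ x ∈ X, (inner ℝ y x : ℝ) - h x ≤ (inner ℝ y (Q y) : ℝ) - h (Q y))
    (v : E → E) (hv : ContinuousOn v X)
    (V : ℝ) (hV : ∀ x ∈ X, ‖v x‖ ≤ V)
    (Xs : Set E) (hXscl : IsClosed Xs) (hXsne : Xs.Nonempty) (hXsX : Xs ⊆ X)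
    -- global variational stability:
    (hVS : ∀ x ∈ X, ∀ p ∈ Xs, (inner ℝ (v x) (x - p) : ℝ) ≤ 0)
    (γ : ℕ → ℝ) (hγ : ∀ n, 0 < γ n)
    (Y : ℕ → E) (hrec : ∀ n : ℕ, Y (n + 1) = Y n + γ n • v (Q (Y n))) :
    ∀ n : ℕ,
      (∑ k ∈ Finset.Icc 1 n, γ k * sInf ((fun p => (inner ℝ (v (Q (Y k))) (p - Q (Y k)) : ℝ)) '' Xs))
          / (∑ k ∈ Finset.Icc 1 n, γ k) ≤
        (sInf ((fun p => h p + ((inner ℝ (Y 1) (Q (Y 1)) : ℝ) - h (Q (Y 1)))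
            - (inner ℝ (Y 1) p : ℝ)) '' Xs)
          + V ^ 2 / (2 * K) * ∑ k ∈ Finset.Icc 1 n, γ k ^ 2)
          / (∑ k ∈ Finset.Icc 1 n, γ k) :=
  stmt17_general X hXc hXconv h K hK hsc Q hQ v V hV Xs hXsne hXsX γ hγ Y hrec
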